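/- Let (X, ‖·‖) be a normed space and T : X → X a mapping. Suppose there exists r ∈ [0, 1) such that for all x, y ∈ X: f(r)‖x − Tx‖ ≤ ‖x − y‖ implies ‖Tx − Ty‖ ≤ r‖x − y‖. Suppose further that for some u ∈ X the sequence of Picard iterates (Tⁿu)ₙ converges to a point z ∈ X. Then for every x ∈ X with x ≠ z, one has ‖Tx − z‖ ≤ r‖x − z‖. -/
import Mathlib


/-- The function f from Suzuki's theorem: f(r) = 1 on [0, (√5−1)/2],
    (1−r)/r² on ((√5−1)/2, 1/√2), and 1/(1+r) on [1/√2, 1). -/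
noncomputable def suzukiF (r : ℝ) : ℝ :=
  if r ≤ (Real.sqrt 5 - 1) / 2 then 1
  else if r < 1 / Real.sqrt 2 then (1 - r) / r ^ 2
  else 1 / (1 + r)

theorem stmt_14 {X : Type*} [NormedAddCommGroup X] [NormedSpace ℝ X]
    (T : X → X) (r : ℝ) (hr0 : 0 ≤ r) (hr1 : r < 1)
    (H : ∀ x y : X, suzukiF r * ‖x - T x‖ ≤ ‖x - y‖ → ‖T x - T y‖ ≤ r * ‖x - y‖)
    (u z : X)
    (hconv : Filter.Tendsto (fun n => T^[n] u) Filter.atTop (nhds z)) :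
    ∀ x : X, x ≠ z → ‖T x - z‖ ≤ r * ‖x - z‖ := by
  have hs5 : Real.sqrt 5 ^ 2 = 5 := Real.sq_sqrt (by norm_num)
  have hs5' : (0:ℝ) ≤ Real.sqrt 5 := Real.sqrt_nonneg 5
  have hf1 : suzukiF r ≤ 1 := by
    unfold suzukiF
    split_ifs with h1 h2
    · exact le_refl 1
    · push_neg at h1
      have hrpos : 0 < r := by nlinarith
      rw [div_le_one (by positivity)]
      nlinarith
    · rw [div_le_one (by linarith)]
      linarith
  intro x hx
  have hTiter : ∀ n : ℕ, T^[n+1] u = T (T^[n] u) := fun n =>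
    Function.iterate_succ_apply' T n u
  have hconv' : Filter.Tendsto (fun n => T (T^[n] u)) Filter.atTop (nhds z) := by
    have h := hconv.comp (Filter.tendsto_add_atTop_nat 1)
    have heq : ((fun n => T^[n] u) ∘ fun a => a + 1) = fun n => T (T^[n] u) := by
      funext n; exact hTiter n
    rwa [heq] at h
  have ha : Filter.Tendsto (fun n => ‖T^[n] u - T (T^[n] u)‖) Filter.atTop (nhds 0) := by
    simpa using (hconv.sub hconv').norm
  have hb : Filter.Tendsto (fun n => ‖T^[n] u - x‖) Filter.atTop (nhds ‖z - x‖) :=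
    ((hconv.sub tendsto_const_nhds).norm)
  have hzx : 0 < ‖z - x‖ := by
    rw [norm_pos_iff]
    exact sub_ne_zero.mpr (Ne.symm hx)
  have hev : ∀ᶠ n in Filter.atTop, ‖T (T^[n] u) - T x‖ ≤ r * ‖T^[n] u - x‖ := by
    have h1 : ∀ᶠ n in Filter.atTop, ‖T^[n] u - T (T^[n] u)‖ < ‖z - x‖ / 2 :=
      ha.eventually (gt_mem_nhds (by linarith))
    have h2 : ∀ᶠ n in Filter.atTop, ‖z - x‖ / 2 < ‖T^[n] u - x‖ :=
      hb.eventually (lt_mem_nhds (by linarith))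
    filter_upwards [h1, h2] with n h1 h2
    apply H
    calc suzukiF r * ‖T^[n] u - T (T^[n] u)‖
        ≤ 1 * ‖T^[n] u - T (T^[n] u)‖ :=
          mul_le_mul_of_nonneg_right hf1 (norm_nonneg _)
      _ ≤ ‖T^[n] u - x‖ := by rw [one_mul]; linarith
  have hlim1 : Filter.Tendsto (fun n => ‖T (T^[n] u) - T x‖) Filter.atTop
      (nhds ‖z - T x‖) := (hconv'.sub tendsto_const_nhds).norm
  have hlim2 : Filter.Tendsto (fun n => r * ‖T^[n] u - x‖) Filter.atTop
      (nhds (r * ‖z - x‖)) := hb.const_mul r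
  have := le_of_tendsto_of_tendsto hlim1 hlim2 hev
  rw [norm_sub_rev z (T x), norm_sub_rev z x] at this
  exact this
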